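/- arXiv:1006.3822 — 5 statements merged into one kernel-verified Lean document; each statement's English description precedes it below -/
import Mathlib

section
/- The Casimir element Ω = Σᵢ ωᵢ ωⁱ of the graded affine Hecke algebra ℍ, defined using dual bases {ωᵢ}, {ωⁱ} of V₀^∨ with respect to a W-invariant inner product, is central in ℍ. -/
/-!
For a bilinear map `β`, the sum `∑ i, β (b i) (b' i)` over `B`-dual bases does not depend on the
choice of dual bases, so it is unchanged by swapping `b` and `b'` (as `B` is symmetric) and by
applying a `B`-isometry to both. `Ω` commutes with the commuting `x ω`, and the `t (s α)`, `α ∈ Δ`,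
generate the `t w`. Pushing `T = t (s α)` through `Ω` with the defining relation gives
`T * ∑ x (s bᵢ) x (s b'ᵢ)`, which is `T * Ω` by invariance, plus a correction term. Combining the
relation at `ω` and at `s ω` with `T² = 1` shows `c α (α(ω) + α(s ω)) = 0` in `H`, which makes the
correction the difference of two dual-basis sums of one bilinear map, hence zero.
-/

open Finset

namespace Module.Basis

variable {K V M ι κ : Type*} [CommRing K] [AddCommGroup V] [Module K V]
  [AddCommGroup M] [Module K M] [DecidableEq ι] [DecidableEq κ]
  {B : V →ₗ[K] V →ₗ[K] K}

theorem repr_apply_eq_of_dual {e e' : Basis ι K V}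
    (h : ∀ i j, B (e i) (e' j) = if i = j then 1 else 0) (v : V) (i : ι) :
    e.repr v i = B v (e' i) := by
  have hcoord : e.coord i = B.flip (e' i) := e.ext fun j => by
    simp [h, Finsupp.single_apply]
  exact LinearMap.congr_fun hcoord v

theorem repr_apply_eq_of_dual' {e e' : Basis ι K V}
    (h : ∀ i j, B (e i) (e' j) = if i = j then 1 else 0) (v : V) (i : ι) :
    e'.repr v i = B (e i) v := by
  have hcoord : e'.coord i = B (e i) := e'.ext fun j => by
    simp [h, Finsupp.single_apply, eq_comm]
  exact LinearMap.congr_fun hcoord v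

variable [Fintype ι] [Fintype κ]

theorem sum_apply_dual_eq (β : V →ₗ[K] V →ₗ[K] M) {e e' : Basis ι K V} {f f' : Basis κ K V}
    (he : ∀ i j, B (e i) (e' j) = if i = j then 1 else 0)
    (hf : ∀ i j, B (f i) (f' j) = if i = j then 1 else 0) :
    ∑ i, β (e i) (e' i) = ∑ j, β (f j) (f' j) := by
  calc ∑ i, β (e i) (e' i)
      = ∑ i, β (∑ j, B (e i) (f' j) • f j) (e' i) := by
        simp_rw [← repr_apply_eq_of_dual hf, f.sum_repr]
    _ = ∑ j, β (f j) (∑ i, B (e i) (f' j) • e' i) := by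
        simp only [map_sum, map_smul, LinearMap.sum_apply, LinearMap.smul_apply]
        exact sum_comm
    _ = ∑ j, β (f j) (f' j) := by
        simp_rw [← repr_apply_eq_of_dual' he, e'.sum_repr]

theorem sum_apply_dual_swap (hB : ∀ u v, B u v = B v u) (β : V →ₗ[K] V →ₗ[K] M)
    {e e' : Basis ι K V} (he : ∀ i j, B (e i) (e' j) = if i = j then 1 else 0) :
    ∑ i, β (e' i) (e i) = ∑ i, β (e i) (e' i) :=
  sum_apply_dual_eq β (fun i j => by rw [hB, he]; exact if_congr eq_comm rfl rfl) he

theorem sum_apply_dual_map (β : V →ₗ[K] V →ₗ[K] M) {e e' : Basis ι K V}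
    (he : ∀ i j, B (e i) (e' j) = if i = j then 1 else 0)
    (g : V ≃ₗ[K] V) (hg : ∀ u v, B (g u) (g v) = B u v) :
    ∑ i, β (g (e i)) (g (e' i)) = ∑ i, β (e i) (e' i) :=
  sum_apply_dual_eq (e := e.map g) (e' := e'.map g) β (fun i j => by simp [hg, he]) he


end Module.Basis

section Hecke

open Module

variable {K V H ι : Type*} [CommRing K] [AddCommGroup V] [Module K V] [Ring H] [Algebra K H]

theorem algebraMap_apply_add_apply_eq_zero {T : H} (hT : T * T = 1) {x : V →ₗ[K] H}
    {g : V →ₗ[K] V} (hg : ∀ v, g (g v) = v) {φ : V →ₗ[K] K}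
    (hrel : ∀ v, x v * T - T * x (g v) = algebraMap K H (φ v)) (v : V) :
    algebraMap K H (φ v + φ (g v)) = 0 := by
  have hcancel : T * (x v * T - T * x (g v)) + (x (g v) * T - T * x (g (g v))) * T = 0 := by
    rw [hg, mul_sub, sub_mul, ← mul_assoc, ← mul_assoc, hT, mul_assoc (x (g v)), hT]
    noncomm_ring
  rw [hrel, hrel, ← Algebra.commutes, ← add_mul, ← map_add] at hcancel
  calc algebraMap K H (φ v + φ (g v)) = algebraMap K H (φ v + φ (g v)) * T * T := by
        rw [mul_assoc, hT, mul_one]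
    _ = 0 := by rw [hcancel, zero_mul]

theorem commute_sum_mul_dual_of_rel [Fintype ι] [DecidableEq ι] {B : V →ₗ[K] V →ₗ[K] K}
    (hB : ∀ u v, B u v = B v u) {e e' : Basis ι K V}
    (he : ∀ i j, B (e i) (e' j) = if i = j then 1 else 0) {T : H} (hT : T * T = 1)
    {x : V →ₗ[K] H} {g : V ≃ₗ[K] V} (hg : ∀ v, g (g v) = v) (hgB : ∀ u v, B (g u) (g v) = B u v)
    {φ : V →ₗ[K] K} (hrel : ∀ v, x v * T - T * x (g v) = algebraMap K H (φ v)) :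
    Commute T (∑ i, x (e i) * x (e' i)) := by
  have hx : ∀ v, x v * T = T * x (g v) + algebraMap K H (φ v) := fun v => by
    rw [← hrel, add_sub_cancel]
  have hanti : ∀ v, algebraMap K H (φ v) = -algebraMap K H (φ (g v)) := fun v =>
    eq_neg_of_add_eq_zero_left <| by
      rw [← map_add]; exact algebraMap_apply_add_apply_eq_zero hT (g := g.toLinearMap) hg hrel v
  let μ : V →ₗ[K] V →ₗ[K] H := (LinearMap.mul K H).compl₁₂ x x
  let γ : V →ₗ[K] V →ₗ[K] H := (LinearMap.mul K H).compl₁₂ (Algebra.linearMap K H ∘ₗ φ) x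
  have hterm : ∀ u w, x u * x w * T = T * μ (g u) (g w) + (γ w u - γ (g u) (g w)) := by
    intro u w
    simp only [μ, γ, LinearMap.compl₁₂_apply, LinearMap.mul_apply', LinearMap.comp_apply,
      Algebra.linearMap_apply]
    rw [mul_assoc, hx w, mul_add, ← mul_assoc, hx u, hanti u, Algebra.commutes]
    noncomm_ring
  symm
  calc (∑ i, x (e i) * x (e' i)) * T
      = ∑ i, (T * μ (g (e i)) (g (e' i)) + (γ (e' i) (e i) - γ (g (e i)) (g (e' i)))) := by
        rw [sum_mul]; exact sum_congr rfl fun i _ => hterm _ _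
    _ = T * ∑ i, x (e i) * x (e' i) := by
        rw [sum_add_distrib, sum_sub_distrib, ← mul_sum, Basis.sum_apply_dual_map μ he g hgB,
          Basis.sum_apply_dual_map γ he g hgB, Basis.sum_apply_dual_swap hB γ he, sub_self,
          add_zero]
        rfl

end Hecke

theorem stmt_3_general
    {V V' : Type} [AddCommGroup V] [Module ℂ V]
    [AddCommGroup V'] [Module ℂ V']
    (P : V →ₗ[ℂ] V' →ₗ[ℂ] ℂ)
    {W : Type} [Group W]
    (σ' : W →* (V' ≃ₗ[ℂ] V'))
    (R Rpos Δ : Finset V) (s : V → W) (c : V → ℝ)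
    {H : Type} [Ring H] [Algebra ℂ H]
    (t : W → H) (x : V' →ₗ[ℂ] H)
    (ht1 : t 1 = 1) (htm : ∀ w₁ w₂ : W, t (w₁ * w₂) = t w₁ * t w₂)
    (hxc : ∀ ω₁ ω₂ : V', x ω₁ * x ω₂ = x ω₂ * x ω₁)
    (hrel : ∀ α ∈ Δ, ∀ ω : V', x ω * t (s α) - t (s α) * x (σ' (s α) ω)
        = algebraMap ℂ H ((c α : ℂ) * P α ω))
    (hΔR : Δ ⊆ Rpos) (hRposR : Rpos ⊆ R)
    (hs2 : ∀ α ∈ R, s α * s α = 1)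
    (hgen : ∀ w : W, ∃ L : List V, (∀ α ∈ L, α ∈ Δ) ∧ w = (L.map s).prod)
    {n : ℕ} (B : V' →ₗ[ℂ] V' →ₗ[ℂ] ℂ)
    (hBsym : ∀ u v : V', B u v = B v u)
    (hBW : ∀ (w : W) (u v : V'), B (σ' w u) (σ' w v) = B u v)
    (b b' : Module.Basis (Fin n) ℂ V')
    (hdual : ∀ i j, B (b i) (b' j) = if i = j then 1 else 0) :
    ∀ a ∈ Algebra.adjoin ℂ (Set.range t ∪ Set.range x),
      a * (∑ i, x (b i) * x (b' i)) = (∑ i, x (b i) * x (b' i)) * a := by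
  set Ω := ∑ i, x (b i) * x (b' i)
  have hsimple : ∀ α ∈ Δ, Commute (t (s α)) Ω := fun α hα => by
    have hα2 := hs2 α (hRposR (hΔR hα))
    refine commute_sum_mul_dual_of_rel hBsym hdual (φ := (c α : ℂ) • P α) ?_ (fun v => ?_)
      (hBW (s α)) (hrel α hα)
    · rw [← htm, hα2, ht1]
    · rw [← LinearEquiv.mul_apply, ← map_mul, hα2, map_one]
      rfl
  let tHom : W →* H := { toFun := t, map_one' := ht1, map_mul' := htm }
  have ht : ∀ w, Commute (t w) Ω := fun w => by
    obtain ⟨L, hL, rfl⟩ := hgen w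
    change Commute (tHom (L.map s).prod) Ω
    rw [map_list_prod, List.map_map]
    exact Commute.list_prod_left _ _ (by simpa [tHom] using fun α hα => hsimple α (hL α hα))
  have hx : ∀ ω, Commute (x ω) Ω := fun ω =>
    Commute.sum_right _ _ _ fun i _ => Commute.mul_right (hxc ω (b i)) (hxc ω (b' i))
  intro a ha
  refine (Algebra.commute_of_mem_adjoin_of_forall_mem_commute ha ?_).symm
  rintro _ (⟨w, rfl⟩ | ⟨ω, rfl⟩)
  exacts [(ht w).symm, (hx ω).symm]

/-- The Casimir element Ω = Σᵢ ωᵢ ωⁱ of the graded affine Hecke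
algebra, defined via dual bases of V₀^∨ w.r.t. a W-invariant inner product,
is central in ℍ (the subalgebra generated by the t_w and S(V^∨)). -/
theorem stmt_3
    {V V' : Type} [AddCommGroup V] [Module ℂ V] [DecidableEq V]
    [AddCommGroup V'] [Module ℂ V']
    (P : V →ₗ[ℂ] V' →ₗ[ℂ] ℂ)
    {W : Type} [Group W]
    (σ : W →* (V ≃ₗ[ℂ] V)) (σ' : W →* (V' ≃ₗ[ℂ] V'))
    (R Rpos Δ : Finset V) (s : V → W) (c : V → ℝ) (cor : V → V')
    {H : Type} [Ring H] [Algebra ℂ H]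
    (t : W → H) (x : V' →ₗ[ℂ] H)
    (ht1 : t 1 = 1) (htm : ∀ w₁ w₂ : W, t (w₁ * w₂) = t w₁ * t w₂)
    (hxc : ∀ ω₁ ω₂ : V', x ω₁ * x ω₂ = x ω₂ * x ω₁)
    (hrel : ∀ α ∈ Δ, ∀ ω : V', x ω * t (s α) - t (s α) * x (σ' (s α) ω)
        = algebraMap ℂ H ((c α : ℂ) * P α ω))
    (hΔR : Δ ⊆ Rpos) (hRposR : Rpos ⊆ R)
    (hRpos : ∀ α ∈ R, (α ∈ Rpos ∧ -α ∉ Rpos) ∨ (α ∉ Rpos ∧ -α ∈ Rpos))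
    (hRW : ∀ (w : W), ∀ α ∈ R, σ w α ∈ R)
    (hs2 : ∀ α ∈ R, s α * s α = 1)
    (hconj : ∀ (w : W), ∀ α ∈ R, s (σ w α) = w * s α * w⁻¹)
    (hsneg : ∀ α ∈ R, s (-α) = s α)
    (hcW : ∀ (w : W) (α : V), c (σ w α) = c α)
    (hcneg : ∀ α ∈ R, c (-α) = c α)
    (hPW : ∀ (w : W) (v : V) (v' : V'), P (σ w v) (σ' w v') = P v v')
    (hsV : ∀ α ∈ R, ∀ v : V, σ (s α) v = v - P v (cor α) • α)
    (hsV' : ∀ α ∈ R, ∀ ω : V', σ' (s α) ω = ω - P α ω • cor α)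
    (hgen : ∀ w : W, ∃ L : List V, (∀ α ∈ L, α ∈ Δ) ∧ w = (L.map s).prod)
    {n : ℕ} (B : V' →ₗ[ℂ] V' →ₗ[ℂ] ℂ)
    (hBsym : ∀ u v : V', B u v = B v u)
    (hBW : ∀ (w : W) (u v : V'), B (σ' w u) (σ' w v) = B u v)
    (b b' : Module.Basis (Fin n) ℂ V')
    (hdual : ∀ i j, B (b i) (b' j) = if i = j then 1 else 0) :
    ∀ a ∈ Algebra.adjoin ℂ (Set.range t ∪ Set.range x),
      a * (∑ i, x (b i) * x (b' i)) = (∑ i, x (b i) * x (b' i)) * a :=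
  stmt_3_general P σ' R Rpos Δ s c t x ht1 htm hxc hrel hΔR hRposR hs2 hgen B hBsym hBW b b' hdual
end

section
/- For ω ∈ V^∨ define T_ω = (1/2) Σ_{β>0} c_β (β, ω) t_{s_β} in the group algebra ℂ[W] ⊂ ℍ. Then for ω₁, ω₂ ∈ V^∨: [T_{ω₁}, T_{ω₂}] = (1/4) Σ_{α>0, β>0, s_α(β)<0} c_α c_β ((α,ω₁)(β,ω₂) − (β,ω₁)(α,ω₂)) t_{s_α} t_{s_β}. -/
/-- For T_ω = (1/2) Σ_{β>0} c_β (β, ω) t_{s_β} ∈ ℂ[W] ⊂ ℍ,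
[T_{ω₁}, T_{ω₂}] = (1/4) Σ_{α>0, β>0, s_α(β)<0} c_α c_β
  ((α,ω₁)(β,ω₂) − (β,ω₁)(α,ω₂)) t_{s_α} t_{s_β}. -/
theorem stmt_5
    {V V' : Type} [AddCommGroup V] [Module ℂ V] [DecidableEq V]
    [AddCommGroup V'] [Module ℂ V']
    (P : V →ₗ[ℂ] V' →ₗ[ℂ] ℂ)
    {W : Type} [Group W]
    (σ : W →* (V ≃ₗ[ℂ] V)) (σ' : W →* (V' ≃ₗ[ℂ] V'))
    (R Rpos Δ : Finset V) (s : V → W) (c : V → ℝ) (cor : V → V')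
    {H : Type} [Ring H] [Algebra ℂ H]
    (t : W → H) (x : V' →ₗ[ℂ] H)
    (ht1 : t 1 = 1) (htm : ∀ w₁ w₂ : W, t (w₁ * w₂) = t w₁ * t w₂)
    (hxc : ∀ ω₁ ω₂ : V', x ω₁ * x ω₂ = x ω₂ * x ω₁)
    (hrel : ∀ α ∈ Δ, ∀ ω : V', x ω * t (s α) - t (s α) * x (σ' (s α) ω)
        = algebraMap ℂ H ((c α : ℂ) * P α ω))
    (hΔR : Δ ⊆ Rpos) (hRposR : Rpos ⊆ R)
    (hRpos : ∀ α ∈ R, (α ∈ Rpos ∧ -α ∉ Rpos) ∨ (α ∉ Rpos ∧ -α ∈ Rpos))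
    (hRW : ∀ (w : W), ∀ α ∈ R, σ w α ∈ R)
    (hs2 : ∀ α ∈ R, s α * s α = 1)
    (hconj : ∀ (w : W), ∀ α ∈ R, s (σ w α) = w * s α * w⁻¹)
    (hsneg : ∀ α ∈ R, s (-α) = s α)
    (hcW : ∀ (w : W) (α : V), c (σ w α) = c α)
    (hcneg : ∀ α ∈ R, c (-α) = c α)
    (hPW : ∀ (w : W) (v : V) (v' : V'), P (σ w v) (σ' w v') = P v v')
    (hsV : ∀ α ∈ R, ∀ v : V, σ (s α) v = v - P v (cor α) • α)
    (hsV' : ∀ α ∈ R, ∀ ω : V', σ' (s α) ω = ω - P α ω • cor α)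
    (hgen : ∀ w : W, ∃ L : List V, (∀ α ∈ L, α ∈ Δ) ∧ w = (L.map s).prod) :
    ∀ ω₁ ω₂ : V',
      ((1/2 : ℂ) • ∑ β ∈ Rpos, ((c β : ℂ) * P β ω₁) • t (s β))
          * ((1/2 : ℂ) • ∑ β ∈ Rpos, ((c β : ℂ) * P β ω₂) • t (s β))
        - ((1/2 : ℂ) • ∑ β ∈ Rpos, ((c β : ℂ) * P β ω₂) • t (s β))
          * ((1/2 : ℂ) • ∑ β ∈ Rpos, ((c β : ℂ) * P β ω₁) • t (s β))
      = (1/4 : ℂ) • ∑ α ∈ Rpos, ∑ β ∈ Rpos.filter (fun β => -(σ (s α) β) ∈ Rpos),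
          ((c α : ℂ) * (c β : ℂ) * (P α ω₁ * P β ω₂ - P β ω₁ * P α ω₂))
            • (t (s α) * t (s β)) := by
  intro ω₁ ω₂
  have hmem : ∀ α ∈ Rpos, α ∈ R := fun α h => hRposR h
  have hnn : ∀ β ∈ Rpos, -β ∉ Rpos := by
    intro β hβ
    rcases hRpos β (hmem β hβ) with ⟨_, h⟩ | ⟨h, _⟩
    · exact h
    · exact absurd hβ h
  have hneg : ∀ γ ∈ R, γ ∉ Rpos → -γ ∈ Rpos := by
    intro γ hγ h
    rcases hRpos γ hγ with ⟨h1, _⟩ | ⟨_, h2⟩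
    · exact absurd h1 h
    · exact h2
  have hσσ : ∀ α ∈ R, ∀ v : V, σ (s α) (σ (s α) v) = v := by
    intro α hα v
    have h : σ (s α) * σ (s α) = 1 := by rw [← map_mul, hs2 α hα, map_one]
    have h2 : (σ (s α) * σ (s α)) v = (1 : V ≃ₗ[ℂ] V) v := by rw [h]
    simpa using h2
  set g1 : V → V → V := fun α β => if σ (s α) β ∈ Rpos then σ (s α) β else -(σ (s α) β)
    with hg1d
  have hg1pos : ∀ α β, σ (s α) β ∈ Rpos → g1 α β = σ (s α) β := by
    intro α β h; simp only [hg1d, if_pos h]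
  have hg1neg : ∀ α β, σ (s α) β ∉ Rpos → g1 α β = -(σ (s α) β) := by
    intro α β h; simp only [hg1d, if_neg h]
  have hg1R : ∀ α ∈ Rpos, ∀ β ∈ Rpos, g1 α β ∈ Rpos := by
    intro α hα β hβ
    have hγR : σ (s α) β ∈ R := hRW (s α) β (hmem β hβ)
    by_cases h : σ (s α) β ∈ Rpos
    · rw [hg1pos α β h]; exact h
    · rw [hg1neg α β h]; exact hneg _ hγR h
  have hg1inv : ∀ α ∈ Rpos, ∀ β ∈ Rpos, g1 α (g1 α β) = β := by
    intro α hα β hβ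
    by_cases h : σ (s α) β ∈ Rpos
    · rw [hg1pos α β h]
      have h2 : σ (s α) (σ (s α) β) = β := hσσ α (hmem α hα) β
      rw [hg1pos α _ (by rw [h2]; exact hβ), h2]
    · rw [hg1neg α β h]
      have h2 : σ (s α) (-(σ (s α) β)) = -β := by
        rw [map_neg, hσσ α (hmem α hα) β]
      rw [hg1neg α _ (by rw [h2]; exact hnn β hβ), h2, neg_neg]
  have hg1t : ∀ α ∈ Rpos, ∀ β ∈ Rpos, s (g1 α β) * s α = s α * s β := by
    intro α hα β hβ
    have hαR := hmem α hα
    have hβR := hmem β hβ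
    have hγR : σ (s α) β ∈ R := hRW (s α) β hβR
    have hinv : (s α)⁻¹ = s α := inv_eq_of_mul_eq_one_right (hs2 α hαR)
    have key : s (σ (s α) β) * s α = s α * s β := by
      rw [hconj (s α) β hβR, hinv, mul_assoc, hs2 α hαR, mul_one]
    by_cases h : σ (s α) β ∈ Rpos
    · rw [hg1pos α β h]; exact key
    · rw [hg1neg α β h, hsneg _ hγR]; exact key
  have hPγ : ∀ ω : V', ∀ α ∈ R, ∀ β : V,
      P (σ (s α) β) ω = P β ω - P β (cor α) * P α ω := by
    intro ω α hα β
    rw [hsV α hα β]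
    simp [map_sub, map_smul, LinearMap.sub_apply, LinearMap.smul_apply, smul_eq_mul]
  have hfkey : ∀ α ∈ Rpos, ∀ β ∈ Rpos,
      ((c (g1 α β) : ℂ) * (c α : ℂ)
          * (P (g1 α β) ω₁ * P α ω₂ - P α ω₁ * P (g1 α β) ω₂))
        = (if σ (s α) β ∈ Rpos then (-1 : ℂ) else 1)
            * ((c α : ℂ) * (c β : ℂ) * (P α ω₁ * P β ω₂ - P β ω₁ * P α ω₂)) := by
    intro α hα β hβ
    have hαR := hmem α hα
    have hβR := hmem β hβ
    have hγR : σ (s α) β ∈ R := hRW (s α) β hβR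
    have hc : c (σ (s α) β) = c β := hcW (s α) β
    have hP1 := hPγ ω₁ α hαR β
    have hP2 := hPγ ω₂ α hαR β
    by_cases h : σ (s α) β ∈ Rpos
    · rw [hg1pos α β h, if_pos h, hc, hP1, hP2]; ring
    · rw [hg1neg α β h, if_neg h]
      have hN1 : P (-(σ (s α) β)) ω₁ = -(P (σ (s α) β) ω₁) := by simp
      have hN2 : P (-(σ (s α) β)) ω₂ = -(P (σ (s α) β) ω₂) := by simp
      rw [hcneg _ hγR, hc, hN1, hN2, hP1, hP2]; ring
  set F : V × V → H := fun p =>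
      ((c p.1 : ℂ) * (c p.2 : ℂ) * (P p.1 ω₁ * P p.2 ω₂ - P p.2 ω₁ * P p.1 ω₂))
        • (t (s p.1) * t (s p.2)) with hFd
  set G : V × V → H := fun p =>
      ((if σ (s p.1) p.2 ∈ Rpos then (-1 : ℂ) else 1)
          * ((c p.1 : ℂ) * (c p.2 : ℂ) * (P p.1 ω₁ * P p.2 ω₂ - P p.2 ω₁ * P p.1 ω₂)))
        • (t (s p.1) * t (s p.2)) with hGd
  have hbij : ∑ p ∈ Rpos ×ˢ Rpos, G p = ∑ p ∈ Rpos ×ˢ Rpos, F p := by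
    refine Finset.sum_nbij' (i := fun p => (g1 p.1 p.2, p.1)) (j := fun p => (p.2, g1 p.2 p.1))
      ?_ ?_ ?_ ?_ ?_
    · intro p hp
      rw [Finset.mem_product] at hp ⊢
      exact ⟨hg1R p.1 hp.1 p.2 hp.2, hp.1⟩
    · intro p hp
      rw [Finset.mem_product] at hp ⊢
      exact ⟨hp.2, hg1R p.2 hp.2 p.1 hp.1⟩
    · intro p hp
      rw [Finset.mem_product] at hp
      show (p.1, g1 p.1 (g1 p.1 p.2)) = p
      rw [hg1inv p.1 hp.1 p.2 hp.2]
    · intro p hp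
      rw [Finset.mem_product] at hp
      show (g1 p.2 (g1 p.2 p.1), p.2) = p
      rw [hg1inv p.2 hp.2 p.1 hp.1]
    · intro p hp
      rw [Finset.mem_product] at hp
      have ht' : t (s (g1 p.1 p.2)) * t (s p.1) = t (s p.1) * t (s p.2) := by
        rw [← htm, hg1t p.1 hp.1 p.2 hp.2, htm]
      simp only [hGd, hFd]
      rw [hfkey p.1 hp.1 p.2 hp.2, ht']
  have hcancel :
      ∑ p ∈ (Rpos ×ˢ Rpos).filter (fun p => σ (s p.1) p.2 ∈ Rpos), F p = 0 := by
    have h2 : ∀ p ∈ Rpos ×ˢ Rpos,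
        F p - G p = if σ (s p.1) p.2 ∈ Rpos then (2 : ℂ) • F p else 0 := by
      intro p hp
      by_cases h : σ (s p.1) p.2 ∈ Rpos
      · simp only [hFd, hGd, if_pos h]
        rw [← sub_smul, smul_smul]
        congr 1
        ring
      · simp only [hFd, hGd, if_neg h]
        rw [one_mul, sub_self]
    have h1 : ∑ p ∈ Rpos ×ˢ Rpos,
        (if σ (s p.1) p.2 ∈ Rpos then (2 : ℂ) • F p else 0) = 0 := by
      rw [← Finset.sum_congr rfl h2, Finset.sum_sub_distrib, hbij, sub_self]
    rw [Finset.sum_ite, Finset.sum_const_zero, add_zero, ← Finset.smul_sum] at h1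
    have h4 : ((2 : ℂ)⁻¹ * 2) •
        ∑ p ∈ (Rpos ×ˢ Rpos).filter (fun p => σ (s p.1) p.2 ∈ Rpos), F p = 0 := by
      rw [mul_smul, h1, smul_zero]
    rwa [show ((2 : ℂ)⁻¹ * 2) = 1 by norm_num, one_smul] at h4
  have hfilter : (Rpos ×ˢ Rpos).filter (fun p => ¬ σ (s p.1) p.2 ∈ Rpos)
      = (Rpos ×ˢ Rpos).filter (fun p => -(σ (s p.1) p.2) ∈ Rpos) := by
    apply Finset.filter_congr
    intro p hp
    rw [Finset.mem_product] at hp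
    have hγR : σ (s p.1) p.2 ∈ R := hRW (s p.1) p.2 (hmem p.2 hp.2)
    constructor
    · exact fun h => hneg _ hγR h
    · exact fun h hpos => (hnn _ hpos) h
  have hmain : ∑ p ∈ Rpos ×ˢ Rpos, F p
      = ∑ p ∈ (Rpos ×ˢ Rpos).filter (fun p => -(σ (s p.1) p.2) ∈ Rpos), F p := by
    rw [← Finset.sum_filter_add_sum_filter_not (Rpos ×ˢ Rpos)
        (fun p => σ (s p.1) p.2 ∈ Rpos) F, hcancel, zero_add, hfilter]
  have hprod : ∑ p ∈ (Rpos ×ˢ Rpos).filter (fun p => -(σ (s p.1) p.2) ∈ Rpos), F p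
      = ∑ α ∈ Rpos, ∑ β ∈ Rpos.filter (fun β => -(σ (s α) β) ∈ Rpos), F (α, β) := by
    rw [Finset.sum_filter, Finset.sum_product]
    refine Finset.sum_congr rfl fun α hα => ?_
    rw [Finset.sum_filter]
  have hA : ((1/2 : ℂ) • ∑ β ∈ Rpos, ((c β : ℂ) * P β ω₁) • t (s β))
          * ((1/2 : ℂ) • ∑ β ∈ Rpos, ((c β : ℂ) * P β ω₂) • t (s β))
        - ((1/2 : ℂ) • ∑ β ∈ Rpos, ((c β : ℂ) * P β ω₂) • t (s β))
          * ((1/2 : ℂ) • ∑ β ∈ Rpos, ((c β : ℂ) * P β ω₁) • t (s β))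
      = (1/4 : ℂ) • ∑ p ∈ Rpos ×ˢ Rpos, F p := by
    rw [smul_mul_smul_comm, smul_mul_smul_comm, ← smul_sub,
      show ((1/2 : ℂ) * (1/2 : ℂ)) = (1/4 : ℂ) by norm_num]
    congr 1
    rw [Finset.sum_mul_sum, Finset.sum_mul_sum, ← Finset.sum_sub_distrib,
      Finset.sum_product]
    refine Finset.sum_congr rfl fun α hα => ?_
    rw [← Finset.sum_sub_distrib]
    refine Finset.sum_congr rfl fun β hβ => ?_
    simp only [hFd]
    rw [smul_mul_smul_comm, smul_mul_smul_comm, ← sub_smul]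
    congr 1
    ring
  rw [hA, hmain, hprod]
end

section
/- If X is a Hermitian ℍ-module with invariant form, S a spin module for C(V^∨) with form satisfying ⟨γ(a)s, s'⟩ = ⟨s, γ(aᵗ)s'⟩, then the Dirac operator D = Σᵢ π(ω̃ᵢ) ⊗ γ(ωⁱ) on X ⊗ S is self-adjoint with respect to the tensor product Hermitian form. -/
/-!
Each summand `π(ω̃ᵢ) ⊗ γ(ωⁱ)` equals `π(-ω̃ᵢ) ⊗ γ(-ωⁱ)`. For the product form the adjoint of a
tensor product of operators is the tensor product of the adjoints, and the adjoint of `π(-ω̃ᵢ)`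
is `π((-ω̃ᵢ)*) = π(ω̃ᵢ)`, while that of `γ(-ωⁱ)` is `γ((-ωⁱ)ᵗ) = γ(ωⁱ)`, with `aᵗ` the reverse of
the grade involution of `a`. So every summand, hence `D`, is self-adjoint.
-/

open scoped TensorProduct

section Biadditive

variable {M N K : Type*} [AddCommGroup K] (F : M → N → K)

theorem map_sum_left_of_add_left [AddCommMonoid M]
    (hF : ∀ u v w, F (u + v) w = F u w + F v w)
    {ι : Type*} (s : Finset ι) (f : ι → M) (w : N) :
    F (∑ i ∈ s, f i) w = ∑ i ∈ s, F (f i) w :=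
  map_sum (AddMonoidHom.mk' (F · w) fun u v => hF u v w) f s

theorem map_sum_right_of_add_right [AddCommMonoid N]
    (hF : ∀ u v w, F u (v + w) = F u v + F u w)
    {ι : Type*} (s : Finset ι) (f : ι → N) (u : M) :
    F u (∑ i ∈ s, f i) = ∑ i ∈ s, F u (f i) :=
  map_sum (AddMonoidHom.mk' (F u) (hF u)) f s

theorem map_zero_left_of_add_left [AddCommMonoid M]
    (hF : ∀ u v w, F (u + v) w = F u w + F v w) (w : N) : F 0 w = 0 :=
  map_zero (AddMonoidHom.mk' (F · w) fun u v => hF u v w)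

theorem map_zero_right_of_add_right [AddCommMonoid N]
    (hF : ∀ u v w, F u (v + w) = F u v + F u w) (u : M) : F u 0 = 0 :=
  map_zero (AddMonoidHom.mk' (F u) (hF u))

end Biadditive

theorem LinearMap.sum_apply_adjoint {R M K ι : Type*} [Semiring R] [AddCommMonoid M]
    [Module R M] [AddCommGroup K] (F : M → M → K)
    (hF_addl : ∀ u v w, F (u + v) w = F u w + F v w)
    (hF_addr : ∀ u v w, F u (v + w) = F u v + F u w)
    (s : Finset ι) (D D' : ι → M →ₗ[R] M) (hD : ∀ i u v, F (D i u) v = F u (D' i v))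
    (u v : M) :
    F ((∑ i ∈ s, D i) u) v = F u ((∑ i ∈ s, D' i) v) := by
  simp only [LinearMap.sum_apply, map_sum_left_of_add_left F hF_addl,
    map_sum_right_of_add_right F hF_addr, hD]

theorem TensorProduct.map_neg_neg {R M N P Q : Type*} [CommSemiring R] [AddCommGroup M] [Module R M]
    [AddCommGroup N] [Module R N] [AddCommGroup P] [Module R P] [AddCommGroup Q] [Module R Q]
    (f : M →ₗ[R] P) (g : N →ₗ[R] Q) :
    map (-f) (-g) = map f g :=
  ext' fun m n => by simp only [map_tmul, LinearMap.neg_apply, neg_tmul, tmul_neg, neg_neg]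

theorem TensorProduct.map_apply_adjoint {R X S K : Type*} [CommSemiring R]
    [AddCommMonoid X] [Module R X] [AddCommMonoid S] [Module R S] [NonUnitalNonAssocRing K]
    (BX : X → X → K) (BS : S → S → K) (BT : X ⊗[R] S → X ⊗[R] S → K)
    (hBT_addl : ∀ u v w, BT (u + v) w = BT u w + BT v w)
    (hBT_addr : ∀ u v w, BT u (v + w) = BT u v + BT u w)
    (hBT : ∀ x₁ x₂ s₁ s₂, BT (x₁ ⊗ₜ s₁) (x₂ ⊗ₜ s₂) = BX x₁ x₂ * BS s₁ s₂)
    (f f' : X →ₗ[R] X) (hf : ∀ a b, BX (f a) b = BX a (f' b))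
    (g g' : S →ₗ[R] S) (hg : ∀ a b, BS (g a) b = BS a (g' b))
    (u v : X ⊗[R] S) :
    BT (map f g u) v = BT u (map f' g' v) := by
  induction u using TensorProduct.induction_on with
  | zero => simp only [map_zero, map_zero_left_of_add_left BT hBT_addl]
  | add p q hp hq => rw [map_add, hBT_addl, hBT_addl, hp, hq]
  | tmul x₁ s₁ =>
    induction v using TensorProduct.induction_on with
    | zero => simp only [map_zero, map_zero_right_of_add_right BT hBT_addr]
    | add p q hp hq => rw [map_add, hBT_addr, hBT_addr, hp, hq]
    | tmul x₂ s₂ => simp only [map_tmul, hBT, hf, hg]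

theorem CliffordAlgebra.reverse_involute_neg_ι {R M : Type*} [CommRing R] [AddCommGroup M]
    [Module R M] (Q : QuadraticForm R M) (m : M) :
    reverse (involute (-ι Q m)) = ι Q m := by
  simp only [map_neg, involute_ι, reverse_ι, neg_neg]

theorem stmt_16_general
    {V V' : Type} [AddCommGroup V] [Module ℂ V]
    [AddCommGroup V'] [Module ℂ V']
    (P : V →ₗ[ℂ] V' →ₗ[ℂ] ℂ)
    {W : Type}
    (Rpos : Finset V) (s : V → W) (c : V → ℝ)
    {H : Type} [Ring H] [Algebra ℂ H]
    (t : W → H) (x : V' →ₗ[ℂ] H)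
    {n : ℕ}
    (b b' : Module.Basis (Fin n) ℂ V')
    (QC : QuadraticForm ℂ V')
    (st : H → H)
    (hst_add : ∀ a b : H, st (a + b) = st a + st b)
    (hst_tilde : ∀ ω : V',
      st (x ω - (1/2 : ℂ) • ∑ β ∈ Rpos, ((c β : ℂ) * P β ω) • t (s β))
        = -(x ω - (1/2 : ℂ) • ∑ β ∈ Rpos, ((c β : ℂ) * P β ω) • t (s β)))
    {X S : Type} [AddCommGroup X] [Module ℂ X] [AddCommGroup S] [Module ℂ S]
    (π : H →ₐ[ℂ] Module.End ℂ X)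
    (γ : CliffordAlgebra QC →ₐ[ℂ] Module.End ℂ S)
    (BX : X → X → ℂ) (BS : S → S → ℂ)
    (hBXinv : ∀ (h : H) (a v : X), BX (π h a) v = BX a (π (st h) v))
    (hBSinv : ∀ (a : CliffordAlgebra QC) (s₁ s₂ : S),
      BS (γ a s₁) s₂
        = BS s₁ (γ (CliffordAlgebra.reverse (CliffordAlgebra.involute a)) s₂))
    (BT : (X ⊗[ℂ] S) → (X ⊗[ℂ] S) → ℂ)
    (hBT_addl : ∀ u v w₀ : X ⊗[ℂ] S, BT (u + v) w₀ = BT u w₀ + BT v w₀)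
    (hBT_addr : ∀ u v w₀ : X ⊗[ℂ] S, BT u (v + w₀) = BT u v + BT u w₀)
    (hBT : ∀ (x₁ x₂ : X) (s₁ s₂ : S),
      BT (x₁ ⊗ₜ[ℂ] s₁) (x₂ ⊗ₜ[ℂ] s₂) = BX x₁ x₂ * BS s₁ s₂) :
    ∀ u v : X ⊗[ℂ] S,
      BT ((∑ i, TensorProduct.map
            (π (x (b i) - (1/2 : ℂ) • ∑ β ∈ Rpos, ((c β : ℂ) * P β (b i)) • t (s β)))
            (γ (CliffordAlgebra.ι QC (b' i)))) u) v
        = BT u ((∑ i, TensorProduct.map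
            (π (x (b i) - (1/2 : ℂ) • ∑ β ∈ Rpos, ((c β : ℂ) * P β (b i)) • t (s β)))
            (γ (CliffordAlgebra.ι QC (b' i)))) v) := by
  intro u v
  have hst_neg : ∀ a, st (-a) = -st a := map_neg (AddMonoidHom.mk' st hst_add)
  refine LinearMap.sum_apply_adjoint BT hBT_addl hBT_addr _ _ _ (fun i u v => ?_) u v
  conv_lhs => rw [← TensorProduct.map_neg_neg]
  refine TensorProduct.map_apply_adjoint BX BS BT hBT_addl hBT_addr hBT _ _ (fun a b => ?_) _ _
    (fun a b => ?_) u v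
  · rw [← map_neg π, hBXinv, hst_neg, hst_tilde, neg_neg]
  · rw [← map_neg γ, hBSinv, CliffordAlgebra.reverse_involute_neg_ι]

/-- If X is a Hermitian ℍ-module (with invariant form for the
anti-involution *, under which ω̃* = −ω̃), and S is a spin module for C(V^∨)
whose form satisfies ⟨γ(a)s, s'⟩ = ⟨s, γ(aᵗ)s'⟩ (aᵗ the transpose
antiautomorphism, ωᵗ = −ω), then the Dirac operator
D = Σᵢ π(ω̃ᵢ) ⊗ γ(ωⁱ) on X ⊗ S is self-adjoint for the product form. -/
theorem stmt_16
    {V V' : Type} [AddCommGroup V] [Module ℂ V] [DecidableEq V]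
    [AddCommGroup V'] [Module ℂ V']
    (P : V →ₗ[ℂ] V' →ₗ[ℂ] ℂ)
    {W : Type} [Group W]
    (σ : W →* (V ≃ₗ[ℂ] V)) (σ' : W →* (V' ≃ₗ[ℂ] V'))
    (R Rpos Δ : Finset V) (s : V → W) (c : V → ℝ) (cor : V → V')
    {H : Type} [Ring H] [Algebra ℂ H]
    (t : W → H) (x : V' →ₗ[ℂ] H)
    (ht1 : t 1 = 1) (htm : ∀ w₁ w₂ : W, t (w₁ * w₂) = t w₁ * t w₂)
    (hxc : ∀ ω₁ ω₂ : V', x ω₁ * x ω₂ = x ω₂ * x ω₁)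
    (hrel : ∀ α ∈ Δ, ∀ ω : V', x ω * t (s α) - t (s α) * x (σ' (s α) ω)
        = algebraMap ℂ H ((c α : ℂ) * P α ω))
    (hΔR : Δ ⊆ Rpos) (hRposR : Rpos ⊆ R)
    (hRpos : ∀ α ∈ R, (α ∈ Rpos ∧ -α ∉ Rpos) ∨ (α ∉ Rpos ∧ -α ∈ Rpos))
    (hRW : ∀ (w : W), ∀ α ∈ R, σ w α ∈ R)
    (hs2 : ∀ α ∈ R, s α * s α = 1)
    (hconj : ∀ (w : W), ∀ α ∈ R, s (σ w α) = w * s α * w⁻¹)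
    (hsneg : ∀ α ∈ R, s (-α) = s α)
    (hcW : ∀ (w : W) (α : V), c (σ w α) = c α)
    (hcneg : ∀ α ∈ R, c (-α) = c α)
    (hPW : ∀ (w : W) (v : V) (v' : V'), P (σ w v) (σ' w v') = P v v')
    (hsV : ∀ α ∈ R, ∀ v : V, σ (s α) v = v - P v (cor α) • α)
    (hsV' : ∀ α ∈ R, ∀ ω : V', σ' (s α) ω = ω - P α ω • cor α)
    (hgen : ∀ w : W, ∃ L : List V, (∀ α ∈ L, α ∈ Δ) ∧ w = (L.map s).prod)
    {n : ℕ} (B : V' →ₗ[ℂ] V' →ₗ[ℂ] ℂ)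
    (hBsym : ∀ u v : V', B u v = B v u)
    (hBW : ∀ (w : W) (u v : V'), B (σ' w u) (σ' w v) = B u v)
    (b b' : Module.Basis (Fin n) ℂ V')
    (hdual : ∀ i j, B (b i) (b' j) = if i = j then 1 else 0)
    (QC : QuadraticForm ℂ V') (hQC : ∀ v : V', QC v = - B v v)
    (st : H → H)
    (hst_add : ∀ a b : H, st (a + b) = st a + st b)
    (hst_mul : ∀ a b : H, st (a * b) = st b * st a)
    (hst_smul : ∀ (z : ℂ) (a : H), st (z • a) = (starRingEnd ℂ z) • st a)
    (hst_tilde : ∀ ω : V',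
      st (x ω - (1/2 : ℂ) • ∑ β ∈ Rpos, ((c β : ℂ) * P β ω) • t (s β))
        = -(x ω - (1/2 : ℂ) • ∑ β ∈ Rpos, ((c β : ℂ) * P β ω) • t (s β)))
    {X S : Type} [AddCommGroup X] [Module ℂ X] [AddCommGroup S] [Module ℂ S]
    (π : H →ₐ[ℂ] Module.End ℂ X)
    (γ : CliffordAlgebra QC →ₐ[ℂ] Module.End ℂ S)
    (BX : X → X → ℂ) (BS : S → S → ℂ)
    (hBXinv : ∀ (h : H) (a v : X), BX (π h a) v = BX a (π (st h) v))
    (hBSinv : ∀ (a : CliffordAlgebra QC) (s₁ s₂ : S),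
      BS (γ a s₁) s₂
        = BS s₁ (γ (CliffordAlgebra.reverse (CliffordAlgebra.involute a)) s₂))
    (BT : (X ⊗[ℂ] S) → (X ⊗[ℂ] S) → ℂ)
    (hBT_addl : ∀ u v w₀ : X ⊗[ℂ] S, BT (u + v) w₀ = BT u w₀ + BT v w₀)
    (hBT_addr : ∀ u v w₀ : X ⊗[ℂ] S, BT u (v + w₀) = BT u v + BT u w₀)
    (hBT : ∀ (x₁ x₂ : X) (s₁ s₂ : S),
      BT (x₁ ⊗ₜ[ℂ] s₁) (x₂ ⊗ₜ[ℂ] s₂) = BX x₁ x₂ * BS s₁ s₂) :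
    ∀ u v : X ⊗[ℂ] S,
      BT ((∑ i, TensorProduct.map
            (π (x (b i) - (1/2 : ℂ) • ∑ β ∈ Rpos, ((c β : ℂ) * P β (b i)) • t (s β)))
            (γ (CliffordAlgebra.ι QC (b' i)))) u) v
        = BT u ((∑ i, TensorProduct.map
            (π (x (b i) - (1/2 : ℂ) • ∑ β ∈ Rpos, ((c β : ℂ) * P β (b i)) • t (s β)))
            (γ (CliffordAlgebra.ι QC (b' i)))) v) :=
  stmt_16_general P Rpos s c t x b b' QC st hst_add hst_tilde π γ BX BS hBXinv hBSinv BT hBT_addl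
    hBT_addr hBT
end

section
/- Let ℍ̄ = ℂ[W] ⋉ S(V^∨) be the associated graded algebra of ℍ and d̄ the induced odd-derivation operator on ℍ̄ ⊗ C(V^∨), given on a simple tensor a = t_w f ⊗ v₁⋯v_k by d̄(a) = Σᵢ ωᵢ t_w f ⊗ ωᵢ v₁⋯v_k − (−1)^k Σᵢ t_w f ωᵢ ⊗ v₁⋯v_k ωᵢ for a self-dual basis {ωᵢ}. Then d̄² = 0. -/
/-!
Put `D = ∑ᵢ ωᵢ ⊗ ωᵢ` in `ℍ̄ ⊗ C(V^∨)`. On `a ⊗ v₁⋯v_k` the operator `d̄` is the graded commutator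
`u ↦ D u - (-1)^k u D`, and left or right multiplication by `D` shifts `k` by one, so `d̄²` is the
ordinary commutator with `D²`. The `ωᵢ` commute in `ℍ̄` and anticommute in `C(V^∨)`, whence
`D² = -Ω ⊗ 1` with `Ω = ∑ᵢ ωᵢ²`. Finally `Ω` is central in `ℍ̄`: it commutes with `S(V^∨)`, and
`t_w Ω = Ω_w t_w` where `Ω_w` is the same sum over the orthonormal family `w(ωᵢ)`; `Ω_w = Ω`
because the orthogonal change-of-basis matrix `M` satisfies `Mᵀ M = 1`.
-/

open scoped TensorProduct

theorem Finset.sum_mul_self_of_anticomm {ι S : Type*} [Ring S] [DecidableEq ι] (s : Finset ι)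
    (y : ι → S) (hy : ∀ i j, i ≠ j → y i * y j + y j * y i = 0) :
    (∑ i ∈ s, y i) * ∑ i ∈ s, y i = ∑ i ∈ s, y i * y i := by
  induction s using Finset.induction_on with
  | empty => simp
  | insert a s ha ih =>
    have hcross : (∑ i ∈ s, y i) * y a + y a * ∑ i ∈ s, y i = 0 := by
      rw [Finset.sum_mul, Finset.mul_sum, ← Finset.sum_add_distrib]
      exact Finset.sum_eq_zero fun i hi => hy i a (ne_of_mem_of_not_mem hi ha)
    calc _ = y a * y a + ∑ i ∈ s, y i * y i + ((∑ i ∈ s, y i) * y a + y a * ∑ i ∈ s, y i) := by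
          rw [Finset.sum_insert ha, add_mul, mul_add, mul_add, ih]; abel
      _ = _ := by rw [hcross, add_zero, Finset.sum_insert ha]

section GradedCommutator
variable {K S : Type*} [CommRing K] [Ring S] [Algebra K S]

def gradedCommutator (ε : K) (X : S) : S →ₗ[K] S :=
  LinearMap.mulLeft K X - ε • LinearMap.mulRight K X

@[simp]
theorem gradedCommutator_apply (ε : K) (X u : S) :
    gradedCommutator ε X u = X * u - ε • (u * X) := rfl

theorem apply_apply_eq_commutator_mul_self {d : S →ₗ[K] S} {ε : K} {X u : S} (hε : ε * ε = 1)
    (hu : u ∈ LinearMap.eqLocus d (gradedCommutator ε X))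
    (hXu : X * u ∈ LinearMap.eqLocus d (gradedCommutator (-ε) X))
    (huX : u * X ∈ LinearMap.eqLocus d (gradedCommutator (-ε) X)) :
    d (d u) = X * X * u - u * (X * X) := by
  rw [LinearMap.mem_eqLocus, gradedCommutator_apply] at hu hXu huX
  rw [hu, map_sub, map_smul, hXu, huX, smul_sub, smul_smul, mul_neg, hε]
  simp only [neg_smul, one_smul, mul_assoc]
  abel

end GradedCommutator

namespace Module.Basis
variable {K V ι : Type*} [CommRing K] [AddCommGroup V] [Module K V] [Fintype ι] [DecidableEq ι]
  {B : V →ₗ[K] V →ₗ[K] K} {b : Basis ι K V}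

theorem repr_apply_eq_of_orthonormal (hb : ∀ i j, B (b i) (b j) = if i = j then 1 else 0)
    (v : V) (j : ι) : b.repr v j = B v (b j) := by
  conv_rhs => rw [← b.sum_repr v]
  simp [-Module.Basis.sum_repr, hb]

theorem apply_eq_sum_mul_of_orthonormal (hb : ∀ i j, B (b i) (b j) = if i = j then 1 else 0)
    (u v : V) : B u v = ∑ j, B u (b j) * B v (b j) := by
  conv_lhs => rw [← b.sum_repr v]
  simp [-Module.Basis.sum_repr, b.repr_apply_eq_of_orthonormal hb, mul_comm]

theorem sum_mul_self_eq_of_orthonormal (hb : ∀ i j, B (b i) (b j) = if i = j then 1 else 0)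
    {A : Type*} [Ring A] [Algebra K A] (f : V →ₗ[K] A) (v : ι → V)
    (hv : ∀ i j, B (v i) (v j) = if i = j then 1 else 0) :
    ∑ i, f (v i) * f (v i) = ∑ i, f (b i) * f (b i) := by
  set M : Matrix ι ι K := Matrix.of fun i j => B (v i) (b j)
  have hM : M * M.transpose = 1 := by
    ext i i'
    simp [M, Matrix.mul_apply, Matrix.one_apply, ← b.apply_eq_sum_mul_of_orthonormal hb, hv]
  have hcol : ∀ j k, ∑ i, M i j * M i k = if j = k then 1 else 0 := fun j k => by
    simpa [Matrix.mul_apply, Matrix.one_apply] using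
      congrArg (· j k) (mul_eq_one_comm.mp hM)
  have hfv : ∀ i, f (v i) = ∑ j, M i j • f (b j) := fun i => by
    conv_lhs => rw [← b.sum_repr (v i)]
    simp [-Module.Basis.sum_repr, M, b.repr_apply_eq_of_orthonormal hb]
  calc ∑ i, f (v i) * f (v i)
      = ∑ j, ∑ k, (∑ i, M i j * M i k) • (f (b j) * f (b k)) := by
        simp_rw [hfv, Finset.sum_mul_sum, smul_mul_smul_comm, Finset.sum_smul]
        rw [Finset.sum_comm]
        exact Finset.sum_congr rfl fun j _ => Finset.sum_comm
    _ = ∑ j, f (b j) * f (b j) := by simp [hcol]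

end Module.Basis

theorem commute_sum_mul_self_of_mem_span {K V A W κ : Type*} [CommRing K] [AddCommGroup V]
    [Module K V] [Ring A] [Algebra K A] [Fintype κ] [DecidableEq κ]
    {B : V →ₗ[K] V →ₗ[K] K} {b : Module.Basis κ K V}
    (hb : ∀ i j, B (b i) (b j) = if i = j then 1 else 0)
    {ρ : W → V → V} (hρ : ∀ w u v, B (ρ w u) (ρ w v) = B u v)
    {t : W → A} {x : V →ₗ[K] A} (hx : ∀ u v, x u * x v = x v * x u)
    (htx : ∀ w v, t w * x v = x (ρ w v) * t w) {a : A}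
    (ha : a ∈ Submodule.span K {u | ∃ (w : W) (L : List V), u = t w * (L.map x).prod}) :
    Commute (∑ i, x (b i) * x (b i)) a := by
  set Ω := ∑ i, x (b i) * x (b i)
  have hx_mem : ∀ v, x v ∈ Subalgebra.centralizer K {Ω} := by
    rintro v _ rfl
    simp only [Ω, Finset.sum_mul, Finset.mul_sum]
    refine Finset.sum_congr rfl fun i _ => ?_
    rw [mul_assoc, hx _ v, ← mul_assoc, hx _ v, mul_assoc]
  have ht_mem : ∀ w, t w ∈ Subalgebra.centralizer K {Ω} := by
    rintro w _ rfl
    have hinv := b.sum_mul_self_eq_of_orthonormal hb x (fun i => ρ w (b i))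
      (fun i j => by rw [hρ, hb])
    calc Ω * t w = (∑ i, x (ρ w (b i)) * x (ρ w (b i))) * t w := by rw [hinv]
      _ = t w * Ω := by
        simp only [Ω, Finset.sum_mul, Finset.mul_sum]
        refine Finset.sum_congr rfl fun i _ => ?_
        rw [← mul_assoc (t w), htx, mul_assoc _ (t w), htx, ← mul_assoc]
  have hspan : Submodule.span K {u | ∃ (w : W) (L : List V), u = t w * (L.map x).prod} ≤
      Subalgebra.toSubmodule (Subalgebra.centralizer K {Ω}) := by
    refine Submodule.span_le.2 ?_
    rintro _ ⟨w, L, rfl⟩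
    exact (mul_mem (ht_mem w) (list_prod_mem (by simpa using fun v _ => hx_mem v)) :
      t w * (L.map x).prod ∈ Subalgebra.centralizer K {Ω})
  exact hspan ha Ω rfl

theorem CliffordAlgebra.span_range_prod_map_ι {R M : Type*} [CommRing R] [AddCommGroup M]
    [Module R M] (Q : QuadraticForm R M) :
    Submodule.span R (Set.range fun L : List M => (L.map (ι Q)).prod) = ⊤ := by
  have : Set.range (fun L : List M => (L.map (ι Q)).prod) =
      Submonoid.closure (Set.range (ι Q)) := by
    ext c
    simp only [← FreeMonoid.mrange_lift, MonoidHom.coe_mrange, Set.mem_range,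
      FreeMonoid.lift_apply]
    exact ⟨fun ⟨L, h⟩ => ⟨FreeMonoid.ofList L, h⟩, fun ⟨L, h⟩ => ⟨L.toList, h⟩⟩
  rw [this, ← Algebra.adjoin_eq_span, adjoin_range_ι, Algebra.top_toSubmodule]

theorem CliffordAlgebra.tensorProduct_ext {R A M N : Type*} [CommRing R] [Ring A] [Algebra R A]
    [AddCommGroup M] [Module R M] [AddCommGroup N] [Module R N] {Q : QuadraticForm R M}
    {f g : A ⊗[R] CliffordAlgebra Q →ₗ[R] N}
    (h : ∀ (a : A) (L : List M), f (a ⊗ₜ (L.map (ι Q)).prod) = g (a ⊗ₜ (L.map (ι Q)).prod)) :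
    f = g :=
  TensorProduct.ext' fun a c => LinearMap.congr_fun
    (LinearMap.ext_on_range (span_range_prod_map_ι Q)
      (f := f ∘ₗ TensorProduct.mk R A _ a) (g := g ∘ₗ TensorProduct.mk R A _ a) (h a)) c

section DiracElement
variable {K A M κ : Type*} [CommRing K] [Ring A] [Algebra K A] [AddCommGroup M] [Module K M]
  [Fintype κ] {Q : QuadraticForm K M}

open CliffordAlgebra

variable (Q) in
def diracElement (x : κ → A) (v : κ → M) : A ⊗[K] CliffordAlgebra Q :=
  ∑ i, x i ⊗ₜ ι Q (v i)

theorem diracElement_mul_tmul (x : κ → A) (v : κ → M) (a : A) (c : CliffordAlgebra Q) :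
    diracElement Q x v * (a ⊗ₜ c) = ∑ i, (x i * a) ⊗ₜ (ι Q (v i) * c) := by
  simp [diracElement, Finset.sum_mul]

theorem tmul_mul_diracElement (x : κ → A) (v : κ → M) (a : A) (c : CliffordAlgebra Q) :
    a ⊗ₜ c * diracElement Q x v = ∑ i, (a * x i) ⊗ₜ (c * ι Q (v i)) := by
  simp [diracElement, Finset.mul_sum]

theorem diracElement_mul_self [DecidableEq κ] {x : κ → A} {v : κ → M}
    (hx : ∀ i j, x i * x j = x j * x i)
    (hv : ∀ i j, i ≠ j → QuadraticMap.polar Q (v i) (v j) = 0) :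
    diracElement Q x v * diracElement Q x v = ∑ i, Q (v i) • ((x i * x i) ⊗ₜ 1) := by
  rw [diracElement, Finset.sum_mul_self_of_anticomm]
  · simp [Algebra.algebraMap_eq_smul_one, ι_sq_scalar]
  · intro i j hij
    rw [Algebra.TensorProduct.tmul_mul_tmul, Algebra.TensorProduct.tmul_mul_tmul, hx j i,
      ← TensorProduct.tmul_add, ι_mul_ι_add_swap, hv i j hij, map_zero, TensorProduct.tmul_zero]

end DiracElement

theorem stmt_17_general
    {V' : Type}
    [AddCommGroup V'] [Module ℂ V']
    {W : Type} [Group W]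
    (σ' : W →* (V' ≃ₗ[ℂ] V'))
    {Hb : Type} [Ring Hb] [Algebra ℂ Hb]
    (t : W → Hb) (x : V' →ₗ[ℂ] Hb)
    (hxc : ∀ ω₁ ω₂ : V', x ω₁ * x ω₂ = x ω₂ * x ω₁)
    (hcross : ∀ (w : W) (ω : V'), t w * x ω = x (σ' w ω) * t w)
    (hspan : ∀ a : Hb, a ∈ Submodule.span ℂ
        {u : Hb | ∃ (w : W) (L : List V'), u = t w * (L.map x).prod})
    (B : V' →ₗ[ℂ] V' →ₗ[ℂ] ℂ)
    (hBW : ∀ (w : W) (u v : V'), B (σ' w u) (σ' w v) = B u v)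
    {n : ℕ} (b : Module.Basis (Fin n) ℂ V')
    (hdual : ∀ i j, B (b i) (b j) = if i = j then 1 else 0)
    (QC : QuadraticForm ℂ V') (hQC : ∀ v : V', QC v = - B v v)
    (d : (Hb ⊗[ℂ] CliffordAlgebra QC) →ₗ[ℂ] (Hb ⊗[ℂ] CliffordAlgebra QC))
    (hd : ∀ (a : Hb) (L : List V'),
      d (a ⊗ₜ[ℂ] (L.map (CliffordAlgebra.ι QC)).prod)
        = ∑ i, (x (b i) * a) ⊗ₜ[ℂ]
            (CliffordAlgebra.ι QC (b i) * (L.map (CliffordAlgebra.ι QC)).prod)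
          - ((-1 : ℂ)^L.length) • ∑ i, (a * x (b i)) ⊗ₜ[ℂ]
            ((L.map (CliffordAlgebra.ι QC)).prod * CliffordAlgebra.ι QC (b i))) :
    d ∘ₗ d = 0 := by
  set X := diracElement QC (fun i => x (b i)) b
  have hΩ : ∀ a, Commute (∑ i, x (b i) * x (b i)) a := fun a =>
    commute_sum_mul_self_of_mem_span hdual hBW hxc hcross (hspan a)
  have hXX : X * X = -((∑ i, x (b i) * x (b i)) ⊗ₜ 1) := by
    rw [diracElement_mul_self (fun i j => hxc _ _) fun i j hij => by
      simp [QuadraticMap.polar, hQC, hdual, hij, Ne.symm hij]]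
    simp [hQC, hdual, TensorProduct.sum_tmul]
  have hgraded : ∀ (a : Hb) (L : List V'), a ⊗ₜ (L.map (CliffordAlgebra.ι QC)).prod ∈
      LinearMap.eqLocus d (gradedCommutator ((-1 : ℂ) ^ L.length) X) := by
    intro a L
    rw [LinearMap.mem_eqLocus, gradedCommutator_apply, hd, diracElement_mul_tmul,
      tmul_mul_diracElement]
  refine CliffordAlgebra.tensorProduct_ext fun (a : Hb) (L : List V') => ?_
  have hε : ((-1 : ℂ) ^ L.length) * (-1) ^ L.length = 1 := by rw [← mul_pow]; simp
  rw [LinearMap.comp_apply, apply_apply_eq_commutator_mul_self hε (hgraded a L) ?_ ?_, hXX,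
    LinearMap.zero_apply]
  · simp [Algebra.TensorProduct.tmul_mul_tmul, (hΩ a).eq]
  · rw [diracElement_mul_tmul]
    refine Submodule.sum_mem _ fun i _ => ?_
    simpa [pow_succ] using hgraded (x (b i) * a) (b i :: L)
  · rw [tmul_mul_diracElement]
    refine Submodule.sum_mem _ fun i _ => ?_
    simpa [pow_succ] using hgraded (a * x (b i)) (L ++ [b i])

/-- On ℍ̄ ⊗ C(V^∨), where ℍ̄ = ℂ[W] ⋉ S(V^∨) is the associated
graded algebra of ℍ, the induced odd-derivation operator d̄, given on simple
tensors a ⊗ v₁⋯v_k by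
d̄(a ⊗ v₁⋯v_k) = Σᵢ ωᵢ a ⊗ ωᵢ v₁⋯v_k − (−1)^k Σᵢ a ωᵢ ⊗ v₁⋯v_k ωᵢ
for a self-dual basis {ωᵢ}, satisfies d̄² = 0. -/
theorem stmt_17
    {V V' : Type} [AddCommGroup V] [Module ℂ V] [DecidableEq V]
    [AddCommGroup V'] [Module ℂ V']
    (P : V →ₗ[ℂ] V' →ₗ[ℂ] ℂ)
    {W : Type} [Group W]
    (σ : W →* (V ≃ₗ[ℂ] V)) (σ' : W →* (V' ≃ₗ[ℂ] V'))
    (R : Finset V) (s : V → W) (cor : V → V')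
    {Hb : Type} [Ring Hb] [Algebra ℂ Hb]
    (t : W → Hb) (x : V' →ₗ[ℂ] Hb)
    (ht1 : t 1 = 1) (htm : ∀ w₁ w₂ : W, t (w₁ * w₂) = t w₁ * t w₂)
    (hxc : ∀ ω₁ ω₂ : V', x ω₁ * x ω₂ = x ω₂ * x ω₁)
    (hcross : ∀ (w : W) (ω : V'), t w * x ω = x (σ' w ω) * t w)
    (hspan : ∀ a : Hb, a ∈ Submodule.span ℂ
        {u : Hb | ∃ (w : W) (L : List V'), u = t w * (L.map x).prod})
    (hs2 : ∀ α ∈ R, s α * s α = 1)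
    (hsV' : ∀ α ∈ R, ∀ ω : V', σ' (s α) ω = ω - P α ω • cor α)
    (B : V' →ₗ[ℂ] V' →ₗ[ℂ] ℂ) (hBsym : ∀ u v : V', B u v = B v u)
    (hBW : ∀ (w : W) (u v : V'), B (σ' w u) (σ' w v) = B u v)
    (hcorP : ∀ α ∈ R, ∀ ω : V', P α ω * B (cor α) (cor α) = 2 * B (cor α) ω)
    {n : ℕ} (b : Module.Basis (Fin n) ℂ V')
    (hdual : ∀ i j, B (b i) (b j) = if i = j then 1 else 0)
    (QC : QuadraticForm ℂ V') (hQC : ∀ v : V', QC v = - B v v)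
    (d : (Hb ⊗[ℂ] CliffordAlgebra QC) →ₗ[ℂ] (Hb ⊗[ℂ] CliffordAlgebra QC))
    (hd : ∀ (a : Hb) (L : List V'),
      d (a ⊗ₜ[ℂ] (L.map (CliffordAlgebra.ι QC)).prod)
        = ∑ i, (x (b i) * a) ⊗ₜ[ℂ]
            (CliffordAlgebra.ι QC (b i) * (L.map (CliffordAlgebra.ι QC)).prod)
          - ((-1 : ℂ)^L.length) • ∑ i, (a * x (b i)) ⊗ₜ[ℂ]
            ((L.map (CliffordAlgebra.ι QC)).prod * CliffordAlgebra.ι QC (b i))) :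
    d ∘ₗ d = 0 :=
  stmt_17_general σ' t x hxc hcross hspan B hBW b hdual QC hQC d hd
end

section
/- With d̄ as above and ρ̄ : ℂ[W̃] → ℍ̄ ⊗ C(V^∨) the diagonal embedding ρ̄(w̃) = t_{p(w̃)} ⊗ w̃, one has ρ̄(ℂ[W̃]) ⊂ ker(d̄). In particular d̄(t_{s_α} ⊗ α^∨) = 0 for every simple root α. -/
/-!
Write `ρ̄(w̃) = t_w ⊗ c` with `c = ι(α₁^∨)⋯ι(α_k^∨)` and `w = s_{α₁}⋯s_{α_k}`. In the Clifford
algebra each `ι(α^∨)` anticommutes a vector past itself at the cost of reflecting it, so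
`c ι(v) = (-1)^k ι(w v) c`, just as `t_w x(v) = x(w v) t_w` in `ℍ̄`. Hence the second sum in
`d̄(t_w ⊗ c)` is `(-1)^k` times the first one with the orthonormal basis `(ωᵢ)` replaced by
`(w ωᵢ)`; since `w` is an isometry, `∑ᵢ ωᵢ ⊗ ωᵢ` does not depend on the orthonormal basis, and
the two sums cancel.
-/

open scoped TensorProduct

namespace CliffordAlgebra

variable {R M : Type*} [CommRing R] [AddCommGroup M] [Module R M] {Q : QuadraticForm R M}

theorem ι_mul_ι_eq_neg_ι_sub_smul_mul_ι {c v : M} {p : R}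
    (h : p * Q c = QuadraticMap.polar Q c v) :
    ι Q c * ι Q v = -(ι Q (v - p • c) * ι Q c) := by
  rw [ι_mul_ι_comm, map_sub, map_smul, sub_mul, smul_mul_assoc, ι_sq_scalar, ← h, map_mul,
    Algebra.smul_def, neg_sub]

theorem list_prod_ι_mul_ι {κ G : Type*} [Monoid G] (ρ : G →* (M ≃ₗ[R] M)) (c : κ → M)
    (s : κ → G) (L : List κ)
    (h : ∀ α ∈ L, ∀ v, ι Q (c α) * ι Q v = -(ι Q (ρ (s α) v) * ι Q (c α))) (v : M) :
    (L.map fun α => ι Q (c α)).prod * ι Q v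
      = (-1 : R) ^ L.length • (ι Q (ρ (L.map s).prod v) * (L.map fun α => ι Q (c α)).prod) := by
  induction L generalizing v with
  | nil => simp
  | cons α L ih =>
    simp only [List.map_cons, List.prod_cons, List.length_cons, map_mul, LinearEquiv.mul_apply,
      List.forall_mem_cons] at h ⊢
    rw [mul_assoc, ih h.2, mul_smul_comm, ← mul_assoc, h.1, pow_succ', mul_smul, neg_mul,
      mul_assoc, neg_one_smul, smul_neg]

end CliffordAlgebra

theorem Module.Basis.sum_apply_isometry_eq {R M N ι : Type*} [CommRing R] [AddCommGroup M]
    [Module R M] [AddCommGroup N] [Module R N] [Fintype ι] [DecidableEq ι]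
    (b : Module.Basis ι R M) (B : M →ₗ[R] M →ₗ[R] R)
    (hb : ∀ i j, B (b i) (b j) = if i = j then 1 else 0)
    (g : M →ₗ[R] M) (hg : ∀ u v, B (g u) (g v) = B u v) (F : M →ₗ[R] M →ₗ[R] N) :
    ∑ i, F (g (b i)) (g (b i)) = ∑ i, F (b i) (b i) := by
  have hcoord : ∀ v j, B v (b j) = b.repr v j := fun v j =>
    LinearMap.congr_fun (b.ext (f₁ := B.flip (b j)) (f₂ := b.coord j)
      fun i => by simp [hb, Finsupp.single_apply]) v
  have hB : ∀ u v, B u v = ∑ j, b.repr u j * b.repr v j := fun u v => by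
    conv_lhs => rw [← b.sum_repr v]
    simp only [map_sum, map_smul, smul_eq_mul, hcoord, mul_comm]
  let O : Matrix ι ι R := Matrix.of fun i j => b.repr (g (b i)) j
  have hOOt : O * O.transpose = 1 := by
    ext i l
    rw [Matrix.one_apply, ← hb, ← hg, hB]
    rfl
  have horth : ∀ j k, ∑ i, O i j * O i k = if j = k then 1 else 0 := fun j k => by
    have hOtO : O.transpose * O = 1 := mul_eq_one_comm.mp hOOt
    simpa [Matrix.mul_apply, Matrix.one_apply] using congrFun₂ hOtO j k
  calc ∑ i, F (g (b i)) (g (b i))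
      = ∑ i, ∑ j, ∑ k, (O i j * O i k) • F (b j) (b k) := by
        refine Finset.sum_congr rfl fun i _ => ?_
        conv_lhs => rw [← b.sum_repr (g (b i))]
        simp only [map_sum, map_smul, LinearMap.sum_apply, LinearMap.smul_apply,
          Finset.smul_sum, smul_smul]
        rw [Finset.sum_comm]
        exact Finset.sum_congr rfl fun j _ => Finset.sum_congr rfl fun k _ => by
          rw [mul_comm]; rfl
    _ = ∑ j, ∑ k, (∑ i, O i j * O i k) • F (b j) (b k) := by
        simp only [Finset.sum_smul]
        rw [Finset.sum_comm]
        exact Finset.sum_congr rfl fun j _ => Finset.sum_comm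
    _ = ∑ i, F (b i) (b i) := by simp [horth]

theorem sum_mul_tmul_mul_eq_smul_sum {R M A C ι : Type*} [CommRing R] [AddCommGroup M]
    [Module R M] [Ring A] [Algebra R A] [Ring C] [Algebra R C] [Fintype ι] [DecidableEq ι]
    (b : Module.Basis ι R M) (B : M →ₗ[R] M →ₗ[R] R)
    (hb : ∀ i j, B (b i) (b j) = if i = j then 1 else 0)
    (g : M →ₗ[R] M) (hg : ∀ u v, B (g u) (g v) = B u v)
    (x : M →ₗ[R] A) (y : M →ₗ[R] C) (a : A) (c : C) (ε : R)
    (ha : ∀ v, a * x v = x (g v) * a) (hc : ∀ v, c * y v = ε • (y (g v) * c)) :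
    ∑ i, (a * x (b i)) ⊗ₜ[R] (c * y (b i)) = ε • ∑ i, (x (b i) * a) ⊗ₜ[R] (y (b i) * c) := by
  simp_rw [ha, hc, TensorProduct.tmul_smul, ← Finset.smul_sum]
  congr 1
  exact b.sum_apply_isometry_eq B hb g hg
    (((TensorProduct.mk R A C).comp ((LinearMap.mulRight R a).comp x)).compl₂
      ((LinearMap.mulRight R c).comp y))

theorem stmt_18_general
    {V V' : Type} [AddCommGroup V] [Module ℂ V]
    [AddCommGroup V'] [Module ℂ V']
    (P : V →ₗ[ℂ] V' →ₗ[ℂ] ℂ)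
    {W : Type} [Group W]
    (σ' : W →* (V' ≃ₗ[ℂ] V'))
    (R : Finset V) (s : V → W) (cor : V → V')
    {Hb : Type} [Ring Hb] [Algebra ℂ Hb]
    (t : W → Hb) (x : V' →ₗ[ℂ] Hb)
    (hcross : ∀ (w : W) (ω : V'), t w * x ω = x (σ' w ω) * t w)
    (hsV' : ∀ α ∈ R, ∀ ω : V', σ' (s α) ω = ω - P α ω • cor α)
    (B : V' →ₗ[ℂ] V' →ₗ[ℂ] ℂ) (hBsym : ∀ u v : V', B u v = B v u)
    (hBW : ∀ (w : W) (u v : V'), B (σ' w u) (σ' w v) = B u v)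
    (hcorP : ∀ α ∈ R, ∀ ω : V', P α ω * B (cor α) (cor α) = 2 * B (cor α) ω)
    {n : ℕ} (b : Module.Basis (Fin n) ℂ V')
    (hdual : ∀ i j, B (b i) (b j) = if i = j then 1 else 0)
    (QC : QuadraticForm ℂ V') (hQC : ∀ v : V', QC v = - B v v)
    (d : (Hb ⊗[ℂ] CliffordAlgebra QC) →ₗ[ℂ] (Hb ⊗[ℂ] CliffordAlgebra QC))
    (hd : ∀ (a : Hb) (L : List V'),
      d (a ⊗ₜ[ℂ] (L.map (CliffordAlgebra.ι QC)).prod)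
        = ∑ i, (x (b i) * a) ⊗ₜ[ℂ]
            (CliffordAlgebra.ι QC (b i) * (L.map (CliffordAlgebra.ι QC)).prod)
          - ((-1 : ℂ)^L.length) • ∑ i, (a * x (b i)) ⊗ₜ[ℂ]
            ((L.map (CliffordAlgebra.ι QC)).prod * CliffordAlgebra.ι QC (b i))) :
    (∀ L : List V, (∀ α ∈ L, α ∈ R) →
      d ((t ((L.map s).prod)) ⊗ₜ[ℂ]
          ((L.map (fun α => CliffordAlgebra.ι QC (cor α))).prod)) = 0)
    ∧ (∀ α ∈ R, d ((t (s α)) ⊗ₜ[ℂ] CliffordAlgebra.ι QC (cor α)) = 0) := by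
  have hrefl : ∀ α ∈ R, ∀ v, CliffordAlgebra.ι QC (cor α) * CliffordAlgebra.ι QC v
      = -(CliffordAlgebra.ι QC (σ' (s α) v) * CliffordAlgebra.ι QC (cor α)) := by
    intro α hα v
    rw [hsV' α hα v]
    refine CliffordAlgebra.ι_mul_ι_eq_neg_ι_sub_smul_mul_ι ?_
    simp only [QuadraticMap.polar, hQC, map_add, LinearMap.add_apply, hBsym v (cor α)]
    linear_combination -hcorP α hα v
  have hker : ∀ L : List V, (∀ α ∈ L, α ∈ R) →
      d ((t ((L.map s).prod)) ⊗ₜ[ℂ]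
        ((L.map (fun α => CliffordAlgebra.ι QC (cor α))).prod)) = 0 := by
    intro L hL
    have hdL := hd (t (L.map s).prod) (L.map cor)
    simp only [List.map_map, Function.comp_def, List.length_map] at hdL
    rw [hdL, sum_mul_tmul_mul_eq_smul_sum b B hdual (σ' _).toLinearMap (hBW _) x _ _ _ _
      (hcross _) (CliffordAlgebra.list_prod_ι_mul_ι σ' cor s L fun α hα => hrefl α (hL α hα)),
      smul_smul, ← pow_add, Even.neg_one_pow ⟨_, rfl⟩, one_smul, sub_self]
  exact ⟨hker, fun α hα => by simpa using hker [α] (by simpa using hα)⟩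

/-- The diagonal embedding ρ̄(w̃) = t_{p(w̃)} ⊗ w̃ of ℂ[W̃] into
ℍ̄ ⊗ C(V^∨) lands in ker(d̄): every product of generators f_α (α a root, each a
scalar multiple of ι(α^∨)) is killed by d̄; in particular
d̄(t_{s_α} ⊗ α^∨) = 0 for every root α. -/
theorem stmt_18
    {V V' : Type} [AddCommGroup V] [Module ℂ V] [DecidableEq V]
    [AddCommGroup V'] [Module ℂ V']
    (P : V →ₗ[ℂ] V' →ₗ[ℂ] ℂ)
    {W : Type} [Group W]
    (σ : W →* (V ≃ₗ[ℂ] V)) (σ' : W →* (V' ≃ₗ[ℂ] V'))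
    (R : Finset V) (s : V → W) (cor : V → V')
    {Hb : Type} [Ring Hb] [Algebra ℂ Hb]
    (t : W → Hb) (x : V' →ₗ[ℂ] Hb)
    (ht1 : t 1 = 1) (htm : ∀ w₁ w₂ : W, t (w₁ * w₂) = t w₁ * t w₂)
    (hxc : ∀ ω₁ ω₂ : V', x ω₁ * x ω₂ = x ω₂ * x ω₁)
    (hcross : ∀ (w : W) (ω : V'), t w * x ω = x (σ' w ω) * t w)
    (hspan : ∀ a : Hb, a ∈ Submodule.span ℂ
        {u : Hb | ∃ (w : W) (L : List V'), u = t w * (L.map x).prod})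
    (hs2 : ∀ α ∈ R, s α * s α = 1)
    (hsV' : ∀ α ∈ R, ∀ ω : V', σ' (s α) ω = ω - P α ω • cor α)
    (B : V' →ₗ[ℂ] V' →ₗ[ℂ] ℂ) (hBsym : ∀ u v : V', B u v = B v u)
    (hBW : ∀ (w : W) (u v : V'), B (σ' w u) (σ' w v) = B u v)
    (hcorP : ∀ α ∈ R, ∀ ω : V', P α ω * B (cor α) (cor α) = 2 * B (cor α) ω)
    {n : ℕ} (b : Module.Basis (Fin n) ℂ V')
    (hdual : ∀ i j, B (b i) (b j) = if i = j then 1 else 0)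
    (QC : QuadraticForm ℂ V') (hQC : ∀ v : V', QC v = - B v v)
    (d : (Hb ⊗[ℂ] CliffordAlgebra QC) →ₗ[ℂ] (Hb ⊗[ℂ] CliffordAlgebra QC))
    (hd : ∀ (a : Hb) (L : List V'),
      d (a ⊗ₜ[ℂ] (L.map (CliffordAlgebra.ι QC)).prod)
        = ∑ i, (x (b i) * a) ⊗ₜ[ℂ]
            (CliffordAlgebra.ι QC (b i) * (L.map (CliffordAlgebra.ι QC)).prod)
          - ((-1 : ℂ)^L.length) • ∑ i, (a * x (b i)) ⊗ₜ[ℂ]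
            ((L.map (CliffordAlgebra.ι QC)).prod * CliffordAlgebra.ι QC (b i))) :
    (∀ L : List V, (∀ α ∈ L, α ∈ R) →
      d ((t ((L.map s).prod)) ⊗ₜ[ℂ]
          ((L.map (fun α => CliffordAlgebra.ι QC (cor α))).prod)) = 0)
    ∧ (∀ α ∈ R, d ((t (s α)) ⊗ₜ[ℂ] CliffordAlgebra.ι QC (cor α)) = 0) :=
  stmt_18_general P σ' R s cor t x hcross hsV' B hBsym hBW hcorP b hdual QC hQC d hd
end
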